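/- Let H and K₀ be real separable Hilbert spaces, A a positive bounded operator on H, V : K₀ → H an isometry (V^*V = I), μ > 0, and h_μ(A) := V (V^* A V + μ I)^{-1} V^*. Then for all u, v ∈ [0, 1/2], ‖(A + μI)^u h_μ(A) (A + μI)^v‖ ≤ μ^{-1 + u + v}. -/

import Mathlib

open ContinuousLinearMap

/-- `S` is the positive square root of the positive operator `T`. -/
def IsSqrtOf {E : Type*} [NormedAddCommGroup E] [InnerProductSpace ℝ E]
    [CompleteSpace E] (S T : E →L[ℝ] E) : Prop :=
  S.IsPositive ∧ S ∘L S = T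

/-- `S` is the inverse `T⁻¹` of the operator `T`. -/
def IsInvOf {E : Type*} [NormedAddCommGroup E] [InnerProductSpace ℝ E]
    [CompleteSpace E] (S T : E →L[ℝ] E) : Prop :=
  S ∘L T = 1 ∧ T ∘L S = 1

/-- `S` is the inverse square root `T^{-1/2}` of the positive invertible operator `T`,
i.e. `S` is positive and `S ∘ S = T⁻¹`. -/
def IsInvSqrtOf {E : Type*} [NormedAddCommGroup E] [InnerProductSpace ℝ E]
    [CompleteSpace E] (S T : E →L[ℝ] E) : Prop :=
  S.IsPositive ∧ IsInvOf (S ∘L S) T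

/-- `p` is the family of real powers `t ↦ A ^ t` (for `t ≥ 0`) of the positive operator `A`,
given by the continuous functional calculus; it is characterized by the semigroup property
together with positivity, continuity, `p 0 = 1` and `p 1 = A`. -/
def IsPowerFamilyOf {E : Type*} [NormedAddCommGroup E] [InnerProductSpace ℝ E]
    [CompleteSpace E] (A : E →L[ℝ] E) (p : ℝ → E →L[ℝ] E) : Prop :=
  p 0 = 1 ∧ p 1 = A ∧ (∀ s t : ℝ, 0 ≤ s → 0 ≤ t → p (s + t) = p s ∘L p t) ∧
    (∀ t : ℝ, 0 ≤ t → (p t).IsPositive) ∧ ContinuousOn p (Set.Ici (0 : ℝ))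

/-! Write `B = A + μ` and `h = V (V* A V + μ)⁻¹ V*`. Since `V* A V + μ = V* B V`, the operator `h`
satisfies `⟪B h y, h y⟫ = ⟪y, h y⟫`. By Cauchy–Schwarz, `s ↦ μ^(1-s) ⟪B^s y, y⟫` is midpoint
log-convex, so a maximum principle on `[0, 1]` bounds it by its endpoint values; as `B ≥ μ` this
gives `⟪B^t y, y⟫ ≤ μ^(t-1) ⟪B y, y⟫` for `t ∈ [0, 1]`. Hence `‖B^a h y‖² ≤ μ^(2a-1) ⟪y, h y⟫` for
`a ≤ 1/2`. Taking `a = v`, `y = B^v x` and using Cauchy–Schwarz once more yields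
`⟪B^v x, h B^v x⟫ ≤ μ^(2v-1) ‖x‖²`, and taking `a = u` then gives the claim. -/

open scoped RealInnerProductSpace

theorem le_of_sq_midpoint_le_mul {φ : ℝ → ℝ} {C : ℝ} (hφ : ContinuousOn φ (Set.Icc 0 1))
    (hφ_nonneg : ∀ s ∈ Set.Icc (0 : ℝ) 1, 0 ≤ φ s) (h0 : φ 0 ≤ C) (h1 : φ 1 ≤ C)
    (hmid : ∀ a ∈ Set.Icc (0 : ℝ) 1, ∀ b ∈ Set.Icc (0 : ℝ) 1, φ ((a + b) / 2) ^ 2 ≤ φ a * φ b)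
    {t : ℝ} (ht : t ∈ Set.Icc (0 : ℝ) 1) : φ t ≤ C := by
  obtain ⟨c, hc, hmax⟩ := isCompact_Icc.exists_isMaxOn (Set.nonempty_Icc.2 zero_le_one) hφ
  -- The maximum point is the midpoint of an endpoint `e` and some `d ∈ [0, 1]`, so the maximum
  -- `M` satisfies `M² ≤ φ e * φ d ≤ C * M`.
  obtain ⟨e, he, hφe, d, hd, rfl⟩ : ∃ e ∈ Set.Icc (0 : ℝ) 1, φ e ≤ C ∧
      ∃ d ∈ Set.Icc (0 : ℝ) 1, c = (e + d) / 2 := by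
    rcases le_total c (1 / 2) with h | h
    · exact ⟨0, by simp, h0, 2 * c, ⟨by linarith [hc.1], by linarith⟩, by ring⟩
    · exact ⟨1, by simp, h1, 2 * c - 1, ⟨by linarith, by linarith [hc.2]⟩, by ring⟩
  have hφd : φ d ≤ φ ((e + d) / 2) := hmax hd
  have hsq := hmid e he d hd
  have hmax_le : φ ((e + d) / 2) ≤ C := by
    nlinarith [hφ_nonneg e he, hφ_nonneg d hd, hφ_nonneg _ hc]
  exact (hmax ht).trans hmax_le

namespace IsPowerFamilyOf

variable {E : Type*} [NormedAddCommGroup E] [InnerProductSpace ℝ E] [CompleteSpace E]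
  {B : E →L[ℝ] E} {p : ℝ → E →L[ℝ] E}

theorem isPositive (hp : IsPowerFamilyOf B p) {t : ℝ} (ht : 0 ≤ t) : (p t).IsPositive :=
  hp.2.2.2.1 t ht

theorem inner_apply_add (hp : IsPowerFamilyOf B p) {a b : ℝ} (ha : 0 ≤ a) (hb : 0 ≤ b)
    (y : E) : ⟪p (a + b) y, y⟫ = ⟪p b y, p a y⟫ := by
  rw [hp.2.2.1 a b ha hb, comp_apply, (hp.isPositive ha).inner_left_eq_inner_right,
    real_inner_comm]

theorem inner_apply_sq_midpoint_le (hp : IsPowerFamilyOf B p) {a b : ℝ} (ha : 0 ≤ a)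
    (hb : 0 ≤ b) (y : E) :
    ⟪p ((a + b) / 2) y, y⟫ ^ 2 ≤ ⟪p a y, y⟫ * ⟪p b y, y⟫ := by
  have halves (s : ℝ) (hs : 0 ≤ s) : ⟪p s y, y⟫ = ⟪p (s / 2) y, p (s / 2) y⟫ := by
    rw [← hp.inner_apply_add (by positivity) (by positivity), add_halves]
  rw [add_div, hp.inner_apply_add (by positivity) (by positivity), halves a ha, halves b hb,
    sq, mul_comm ⟪p (a / 2) y, _⟫]
  exact real_inner_mul_inner_self_le _ _

variable {μ : ℝ}

theorem inner_apply_le_rpow_mul (hp : IsPowerFamilyOf B p) (hμ : 0 < μ)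
    (hB : ∀ y, μ * ‖y‖ ^ 2 ≤ ⟪B y, y⟫) {t : ℝ} (ht : t ∈ Set.Icc (0 : ℝ) 1) (y : E) :
    ⟪p t y, y⟫ ≤ μ ^ (t - 1) * ⟪B y, y⟫ := by
  have hweighted : μ ^ (1 - t) * ⟪p t y, y⟫ ≤ ⟪B y, y⟫ := by
    refine le_of_sq_midpoint_le_mul (φ := fun s => μ ^ (1 - s) * ⟪p s y, y⟫) ?_
      (fun s hs => mul_nonneg (by positivity) ((hp.isPositive hs.1).inner_nonneg_left y))
      ?_ ?_ ?_ ht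
    · have hpy : ContinuousOn (fun s => p s y) (Set.Icc 0 1) :=
        (apply ℝ E y).continuous.comp_continuousOn (hp.2.2.2.2.mono fun s hs => hs.1)
      exact (continuousOn_const.rpow (continuousOn_const.sub continuousOn_id)
        fun _ _ => Or.inl hμ.ne').mul (hpy.inner continuousOn_const)
    · simpa [hp.1, real_inner_self_eq_norm_sq] using hB y
    · simp [hp.2.1]
    · intro a ha b hb
      have hweight : (μ ^ (1 - (a + b) / 2)) ^ 2 = μ ^ (1 - a) * μ ^ (1 - b) := by
        rw [← Real.rpow_natCast, ← Real.rpow_mul hμ.le, ← Real.rpow_add hμ]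
        ring_nf
      calc (μ ^ (1 - (a + b) / 2) * ⟪p ((a + b) / 2) y, y⟫) ^ 2
          = (μ ^ (1 - a) * μ ^ (1 - b)) * ⟪p ((a + b) / 2) y, y⟫ ^ 2 := by
            rw [mul_pow, hweight]
        _ ≤ (μ ^ (1 - a) * μ ^ (1 - b)) * (⟪p a y, y⟫ * ⟪p b y, y⟫) := by
            gcongr
            exact hp.inner_apply_sq_midpoint_le ha.1 hb.1 y
        _ = _ := by ring
  calc ⟪p t y, y⟫ = μ ^ (t - 1) * (μ ^ (1 - t) * ⟪p t y, y⟫) := by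
        rw [← mul_assoc, ← Real.rpow_add hμ]
        simp
    _ ≤ μ ^ (t - 1) * ⟪B y, y⟫ := by gcongr

theorem norm_apply_sq_le (hp : IsPowerFamilyOf B p) (hμ : 0 < μ)
    (hB : ∀ y, μ * ‖y‖ ^ 2 ≤ ⟪B y, y⟫) {a : ℝ} (ha0 : 0 ≤ a) (ha : a ≤ 1 / 2) (y : E) :
    ‖p a y‖ ^ 2 ≤ μ ^ (2 * a - 1) * ⟪B y, y⟫ := by
  rw [← real_inner_self_eq_norm_sq, ← hp.inner_apply_add ha0 ha0, ← two_mul]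
  exact hp.inner_apply_le_rpow_mul hμ hB ⟨by linarith, by linarith⟩ y

variable {h : E →L[ℝ] E}

theorem inner_apply_comp_le (hp : IsPowerFamilyOf B p) (hμ : 0 < μ)
    (hB : ∀ y, μ * ‖y‖ ^ 2 ≤ ⟪B y, y⟫) (hh : ∀ y, ⟪B (h y), h y⟫ = ⟪y, h y⟫)
    {v : ℝ} (hv0 : 0 ≤ v) (hv : v ≤ 1 / 2) (x : E) :
    ⟪p v x, h (p v x)⟫ ≤ μ ^ (2 * v - 1) * ‖x‖ ^ 2 := by
  set z := h (p v x)
  have hsq : ‖p v z‖ ^ 2 ≤ μ ^ (2 * v - 1) * ⟪p v x, z⟫ := by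
    rw [← hh]
    exact hp.norm_apply_sq_le hμ hB hv0 hv z
  have hcs : ⟪p v x, z⟫ ≤ ‖x‖ * ‖p v z‖ := by
    rw [(hp.isPositive hv0).inner_left_eq_inner_right]
    exact real_inner_le_norm _ _
  have hK : 0 < μ ^ (2 * v - 1) := by positivity
  have hpvz : ‖p v z‖ ≤ μ ^ (2 * v - 1) * ‖x‖ := by
    have := hsq.trans (mul_le_mul_of_nonneg_left hcs hK.le)
    nlinarith [norm_nonneg (p v z), mul_nonneg hK.le (norm_nonneg x)]
  calc ⟪p v x, z⟫ ≤ ‖x‖ * ‖p v z‖ := hcs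
    _ ≤ ‖x‖ * (μ ^ (2 * v - 1) * ‖x‖) := by gcongr
    _ = μ ^ (2 * v - 1) * ‖x‖ ^ 2 := by ring

theorem norm_apply_comp_apply_le (hp : IsPowerFamilyOf B p) (hμ : 0 < μ)
    (hB : ∀ y, μ * ‖y‖ ^ 2 ≤ ⟪B y, y⟫) (hh : ∀ y, ⟪B (h y), h y⟫ = ⟪y, h y⟫)
    {u v : ℝ} (hu0 : 0 ≤ u) (hu : u ≤ 1 / 2) (hv0 : 0 ≤ v) (hv : v ≤ 1 / 2) (x : E) :
    ‖p u (h (p v x))‖ ≤ μ ^ (-1 + u + v) * ‖x‖ := by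
  have hweight : μ ^ (2 * u - 1) * μ ^ (2 * v - 1) = (μ ^ (-1 + u + v)) ^ 2 := by
    rw [← Real.rpow_add hμ, ← Real.rpow_natCast, ← Real.rpow_mul hμ.le]
    ring_nf
  rw [← sq_le_sq₀ (norm_nonneg _) (by positivity)]
  calc ‖p u (h (p v x))‖ ^ 2 ≤ μ ^ (2 * u - 1) * ⟪p v x, h (p v x)⟫ := by
        rw [← hh]
        exact hp.norm_apply_sq_le hμ hB hu0 hu _
    _ ≤ μ ^ (2 * u - 1) * (μ ^ (2 * v - 1) * ‖x‖ ^ 2) := by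
        gcongr
        exact hp.inner_apply_comp_le hμ hB hh hv0 hv x
    _ = (μ ^ (-1 + u + v) * ‖x‖) ^ 2 := by rw [← mul_assoc, hweight, mul_pow]

end IsPowerFamilyOf

theorem inner_apply_conj_of_comp_eq_one {H K : Type*} [NormedAddCommGroup H]
    [InnerProductSpace ℝ H] [CompleteSpace H] [NormedAddCommGroup K] [InnerProductSpace ℝ K]
    [CompleteSpace K] {B : H →L[ℝ] H} {V : K →L[ℝ] H} {R : K →L[ℝ] K}
    (hR : (adjoint V ∘L B ∘L V) ∘L R = 1) (y : H) :
    ⟪B ((V ∘L R ∘L adjoint V) y), (V ∘L R ∘L adjoint V) y⟫ =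
      ⟪y, (V ∘L R ∘L adjoint V) y⟫ := by
  set w := R (adjoint V y)
  have hw : adjoint V (B (V w)) = adjoint V y := by
    simpa using DFunLike.congr_fun hR (adjoint V y)
  calc ⟪B (V w), V w⟫ = ⟪adjoint V (B (V w)), w⟫ := (adjoint_inner_left _ _ _).symm
    _ = ⟪y, V w⟫ := by rw [hw, adjoint_inner_left]

theorem stmt7_general {H K₀ : Type*}
    [NormedAddCommGroup H] [InnerProductSpace ℝ H] [CompleteSpace H]
    [NormedAddCommGroup K₀] [InnerProductSpace ℝ K₀] [CompleteSpace K₀]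
    (A : H →L[ℝ] H) (hA : A.IsPositive)
    (V : K₀ →L[ℝ] H) (hV : (adjoint V) ∘L V = 1)
    (mu : ℝ) (hmu : 0 < mu)
    (Winv : K₀ →L[ℝ] K₀)
    (hWinv : IsInvOf Winv ((adjoint V) ∘L A ∘L V + mu • (1 : K₀ →L[ℝ] K₀)))
    (p : ℝ → H →L[ℝ] H) (hp : IsPowerFamilyOf (A + mu • (1 : H →L[ℝ] H)) p)
    (u v : ℝ) (hu0 : 0 ≤ u) (hu : u ≤ 1 / 2) (hv0 : 0 ≤ v) (hv : v ≤ 1 / 2) :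
    ‖p u ∘L (V ∘L Winv ∘L (adjoint V)) ∘L p v‖ ≤ mu ^ (-1 + u + v) := by
  have hB : ∀ y, mu * ‖y‖ ^ 2 ≤ ⟪(A + mu • (1 : H →L[ℝ] H)) y, y⟫ := fun y => by
    simp [inner_add_left, real_inner_smul_left, hA.inner_nonneg_left y]
  have hcompression : adjoint V ∘L (A + mu • (1 : H →L[ℝ] H)) ∘L V =
      adjoint V ∘L A ∘L V + mu • (1 : K₀ →L[ℝ] K₀) := by
    rw [add_comp, comp_add, smul_comp, comp_smul, one_def, id_comp, hV]
  have hh := inner_apply_conj_of_comp_eq_one (hcompression ▸ hWinv.2)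
  exact opNorm_le_bound _ (by positivity) fun x =>
    hp.norm_apply_comp_apply_le hmu hB hh hu0 hu hv0 hv x

/-- For a positive operator `A` on `H`, an isometry `V : K₀ → H`, `mu > 0`,
`h_mu(A) := V (V^* A V + mu I)⁻¹ V^*` and exponents `u, v ∈ [0, 1/2]`, one has
`‖(A + mu I)^u h_mu(A) (A + mu I)^v‖ ≤ mu^{-1+u+v}`. -/
theorem stmt7 {H K₀ : Type*}
    [NormedAddCommGroup H] [InnerProductSpace ℝ H] [CompleteSpace H]
    [TopologicalSpace.SeparableSpace H]
    [NormedAddCommGroup K₀] [InnerProductSpace ℝ K₀] [CompleteSpace K₀]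
    [TopologicalSpace.SeparableSpace K₀]
    (A : H →L[ℝ] H) (hA : A.IsPositive)
    (V : K₀ →L[ℝ] H) (hV : (adjoint V) ∘L V = 1)
    (mu : ℝ) (hmu : 0 < mu)
    (Winv : K₀ →L[ℝ] K₀)
    (hWinv : IsInvOf Winv ((adjoint V) ∘L A ∘L V + mu • (1 : K₀ →L[ℝ] K₀)))
    (p : ℝ → H →L[ℝ] H) (hp : IsPowerFamilyOf (A + mu • (1 : H →L[ℝ] H)) p)
    (u v : ℝ) (hu0 : 0 ≤ u) (hu : u ≤ 1 / 2) (hv0 : 0 ≤ v) (hv : v ≤ 1 / 2) :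
    ‖p u ∘L (V ∘L Winv ∘L (adjoint V)) ∘L p v‖ ≤ mu ^ (-1 + u + v) :=
  stmt7_general A hA V hV mu hmu Winv hWinv p hp u v hu0 hu hv0 hv
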